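/- Let (Ω, F) be a measurable space, let k be a positive integer, let p₁, …, p_k and p′₁, …, p′_k be probability measures on Ω, and let α = (α₁, …, α_k) and α′ = (α′₁, …, α′_k) be probability vectors (αᵢ ≥ 0, Σᵢ αᵢ = 1, and likewise for α′) with α′ᵢ > 0 whenever αᵢ > 0. Then the Kullback–Leibler divergence between the mixture measures satisfies KL(Σᵢ₌₁ᵏ αᵢ pᵢ ‖ Σᵢ₌₁ᵏ α′ᵢ p′ᵢ) ≤ KL(α ‖ α′) + Σᵢ₌₁ᵏ αᵢ · KL(pᵢ ‖ p′ᵢ), where KL(α ‖ α′) = Σᵢ αᵢ log(αᵢ/α′ᵢ) is the Kullback–Leibler divergence between the two probability vectors. -/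

import Mathlib

/-!
Write `μ = ∑ αᵢ pᵢ`, `ν = ∑ α'ᵢ p'ᵢ`, `g = dμ/dν` and `rᵢ = dpᵢ/dp'ᵢ`. Almost everywhere on `pᵢ`,
the inequality `log t ≤ t - 1` at `t = α'ᵢ g / (αᵢ rᵢ)` gives
`log g ≤ log (αᵢ / α'ᵢ) + log rᵢ + α'ᵢ g / (αᵢ rᵢ) - 1`.
Integrating against `αᵢ pᵢ` and summing over `i`, the error terms add up to
`∑ α'ᵢ ∫ g / rᵢ dpᵢ - ∑ αᵢ ≤ ∑ α'ᵢ ∫ g dp'ᵢ - ∑ αᵢ = μ(Ω) - ∑ αᵢ = 0`.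
The same bound, together with `-log g ≤ 1 / g` and `∫ 1 / g dμ ≤ ν(Ω)`, makes `log g`
integrable under `μ`.
-/

open MeasureTheory
open scoped Classical

/-- Kullback–Leibler divergence: `∫ log (dμ/dν) dμ` when `μ ≪ ν` (and the
log-likelihood ratio is integrable), and `+∞` otherwise. -/

noncomputable def klDiv {Ω : Type*} [MeasurableSpace Ω] (μ ν : Measure Ω) : EReal :=
  if μ ≪ ν ∧ Integrable (llr μ ν) μ then ((∫ x, llr μ ν x ∂μ : ℝ) : EReal) else ⊤

open Real

lemma neg_log_le_inv {t : ℝ} (ht : 0 ≤ t) : -log t ≤ t⁻¹ := by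
  rcases ht.eq_or_lt with rfl | ht
  · simp
  · have h := log_le_sub_one_of_pos (inv_pos.2 ht)
    rw [log_inv] at h
    linarith

lemma abs_mul_div_le (a b : ℝ) : |a * (b / a)| ≤ |b| := by
  rcases eq_or_ne a 0 with rfl | ha
  · simp
  · rw [mul_div_cancel₀ b ha]

lemma mul_div_le_of_nonneg {a b : ℝ} (hb : 0 ≤ b) : a * (b / a) ≤ b := by
  rcases eq_or_ne a 0 with rfl | ha
  · simpa using hb
  · rw [mul_div_cancel₀ b ha]

@[norm_cast]
lemma EReal.coe_finsetSum {ι : Type*} (s : Finset ι) (f : ι → ℝ) :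
    ((∑ i ∈ s, f i : ℝ) : EReal) = ∑ i ∈ s, (f i : EReal) :=
  map_sum (⟨⟨(↑), EReal.coe_zero⟩, EReal.coe_add⟩ : ℝ →+ EReal) f s

lemma EReal.finsetSum_eq_top {ι : Type*} {s : Finset ι} {f : ι → EReal}
    (hf : ∀ i ∈ s, f i ≠ ⊥) {i : ι} (hi : i ∈ s) (htop : f i = ⊤) : ∑ j ∈ s, f j = ⊤ := by
  rw [← Finset.add_sum_erase s f hi, htop]
  refine EReal.top_add_of_ne_bot (Finset.sum_induction _ (· ≠ ⊥)
    (fun _ _ ha hb => EReal.add_ne_bot_iff.2 ⟨ha, hb⟩) EReal.zero_ne_bot fun j hj => ?_)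
  exact hf j (Finset.mem_of_mem_erase hj)

section

variable {Ω : Type*} [MeasurableSpace Ω] {μ ν p p' : Measure Ω}

lemma MeasureTheory.Measure.le_finsetSum {ι : Type*} [Fintype ι] (q : ι → Measure Ω) (i : ι) :
    q i ≤ ∑ j, q j :=
  Finset.single_le_sum (fun _ _ => Measure.zero_le _) (Finset.mem_univ i)

instance MeasureTheory.isFiniteMeasure_ofReal_smul (c : ℝ) (q : Measure Ω) [IsFiniteMeasure q] :
    IsFiniteMeasure (ENNReal.ofReal c • q) :=
  q.smul_finite ENNReal.ofReal_ne_top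

lemma MeasureTheory.Measure.absolutelyContinuous_of_smul_le {c : ℝ} (hc : 0 < c)
    (h : ENNReal.ofReal c • p ≤ μ) : p ≪ μ :=
  (Measure.absolutelyContinuous_smul (ENNReal.ofReal_pos.2 hc).ne').trans
    (Measure.absolutelyContinuous_of_le h)

lemma MeasureTheory.Integrable.of_smul_le {E : Type*} [NormedAddCommGroup E] {f : Ω → E} {c : ℝ}
    (hf : Integrable f μ) (hc : 0 < c) (h : ENNReal.ofReal c • p ≤ μ) : Integrable f p :=
  (integrable_smul_measure (ENNReal.ofReal_pos.2 hc).ne' ENNReal.ofReal_ne_top).1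
    (hf.mono_measure h)

lemma ae_toReal_rnDeriv_pos [SigmaFinite μ] [SigmaFinite ν] (hμν : μ ≪ ν) :
    ∀ᵐ x ∂μ, 0 < (μ.rnDeriv ν x).toReal := by
  filter_upwards [Measure.rnDeriv_pos hμν, hμν.ae_le (Measure.rnDeriv_lt_top μ ν)] with x h0 htop
  exact ENNReal.toReal_pos h0.ne' htop.ne

lemma neg_inv_toReal_rnDeriv_le_llr (μ ν : Measure Ω) (x : Ω) :
    -((μ.rnDeriv ν x).toReal)⁻¹ ≤ llr μ ν x := by
  have h := neg_log_le_inv (μ.rnDeriv ν x).toReal_nonneg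
  rw [llr]
  linarith

lemma integrable_inv_toReal_rnDeriv [SigmaFinite μ] [IsFiniteMeasure ν] (hμν : μ ≪ ν) :
    Integrable (fun x => ((μ.rnDeriv ν x).toReal)⁻¹) μ := by
  simp_rw [← ENNReal.toReal_inv]
  refine integrable_toReal_of_lintegral_ne_top (Measure.measurable_rnDeriv μ ν).inv.aemeasurable ?_
  rw [← lintegral_rnDeriv_mul hμν (f := fun x => (μ.rnDeriv ν x)⁻¹)
    (Measure.measurable_rnDeriv μ ν).inv.aemeasurable]
  refine (lt_of_le_of_lt ?_ (measure_lt_top ν Set.univ)).ne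
  calc ∫⁻ x, μ.rnDeriv ν x * (μ.rnDeriv ν x)⁻¹ ∂ν ≤ ∫⁻ _, 1 ∂ν :=
        lintegral_mono fun x => ENNReal.mul_inv_le_one _
    _ = ν Set.univ := lintegral_one

lemma integrable_div_toReal_rnDeriv [SigmaFinite p] [SigmaFinite p'] (hpp' : p ≪ p')
    {f : Ω → ℝ} (hf : Integrable f p') :
    Integrable (fun x => f x / (p.rnDeriv p' x).toReal) p := by
  rw [← integrable_toReal_rnDeriv_mul_iff hpp']
  have hr := (Measure.measurable_rnDeriv p p').ennreal_toReal.aemeasurable (μ := p')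
  refine hf.mono (hr.mul (hf.aemeasurable.div hr)).aestronglyMeasurable (ae_of_all _ fun x => ?_)
  simpa only [Real.norm_eq_abs] using abs_mul_div_le _ _

lemma integral_div_toReal_rnDeriv_le [SigmaFinite p] [SigmaFinite p'] (hpp' : p ≪ p')
    {f : Ω → ℝ} (hf : Integrable f p') (hf0 : 0 ≤ f) :
    ∫ x, f x / (p.rnDeriv p' x).toReal ∂p ≤ ∫ x, f x ∂p' := by
  rw [← integral_toReal_rnDeriv_mul hpp']
  exact integral_mono ((integrable_toReal_rnDeriv_mul_iff hpp').2
    (integrable_div_toReal_rnDeriv hpp' hf)) hf fun x => mul_div_le_of_nonneg (hf0 x)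

lemma ae_llr_le [SigmaFinite μ] [SigmaFinite ν] [SigmaFinite p] [SigmaFinite p']
    (hμν : μ ≪ ν) (hpμ : p ≪ μ) (hpp' : p ≪ p') {c c' : ℝ} (hc : 0 < c) (hc' : 0 < c') :
    ∀ᵐ x ∂p, llr μ ν x ≤ log (c / c') + llr p p' x
      + c' / c * ((μ.rnDeriv ν x).toReal / (p.rnDeriv p' x).toReal) - 1 := by
  filter_upwards [hpμ.ae_le (ae_toReal_rnDeriv_pos hμν), ae_toReal_rnDeriv_pos hpp']
    with x hG hR
  set G := (μ.rnDeriv ν x).toReal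
  set R := (p.rnDeriv p' x).toReal
  have ht : 0 < c' / c * (G / R) := by positivity
  have hsplit : log G = log (c / c') + log R + log (c' / c * (G / R)) := by
    rw [← log_mul (by positivity) hR.ne', ← log_mul (by positivity) ht.ne']
    congr 1
    field_simp
  rw [llr, llr, hsplit]
  linarith [log_le_sub_one_of_pos ht]

section Component

variable [IsFiniteMeasure μ] [IsFiniteMeasure ν] [IsFiniteMeasure p'] {c c' : ℝ}

lemma integrable_llr_of_smul_le [IsFiniteMeasure p] (hμν : μ ≪ ν) (hpp' : p ≪ p')
    (hc : 0 < c) (hc' : 0 < c') (hpμ : ENNReal.ofReal c • p ≤ μ)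
    (hp'ν : ENNReal.ofReal c' • p' ≤ ν) (hint : Integrable (llr p p') p) :
    Integrable (llr μ ν) p := by
  have hG : Integrable (fun x => (μ.rnDeriv ν x).toReal) p' :=
    Measure.integrable_toReal_rnDeriv.of_smul_le hc' hp'ν
  refine integrable_of_le_of_le (stronglyMeasurable_llr μ ν).aestronglyMeasurable
    (ae_of_all _ (neg_inv_toReal_rnDeriv_le_llr μ ν))
    (ae_llr_le hμν (Measure.absolutelyContinuous_of_smul_le hc hpμ) hpp' hc hc')
    ((integrable_inv_toReal_rnDeriv hμν).neg.of_smul_le hc hpμ) ?_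
  exact (((integrable_const _).add hint).add
    ((integrable_div_toReal_rnDeriv hpp' hG).const_mul _)).sub (integrable_const _)

lemma mul_integral_llr_le_of_smul_le [IsProbabilityMeasure p] (hμν : μ ≪ ν) (hpp' : p ≪ p')
    (hc : 0 < c) (hc' : 0 < c') (hpμ : ENNReal.ofReal c • p ≤ μ)
    (hp'ν : ENNReal.ofReal c' • p' ≤ ν) (hint : Integrable (llr p p') p) :
    c * ∫ x, llr μ ν x ∂p ≤ c * log (c / c') + c * ∫ x, llr p p' x ∂p
      + c' * ∫ x, (μ.rnDeriv ν x).toReal ∂p' - c := by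
  have hG : Integrable (fun x => (μ.rnDeriv ν x).toReal) p' :=
    Measure.integrable_toReal_rnDeriv.of_smul_le hc' hp'ν
  have hdiv := integrable_div_toReal_rnDeriv hpp' hG
  have hbound : ∫ x, llr μ ν x ∂p ≤ ∫ x, (log (c / c') + llr p p' x
      + c' / c * ((μ.rnDeriv ν x).toReal / (p.rnDeriv p' x).toReal) - 1) ∂p :=
    integral_mono_ae (integrable_llr_of_smul_le hμν hpp' hc hc' hpμ hp'ν hint)
      ((((integrable_const _).add hint).add (hdiv.const_mul _)).sub (integrable_const _))
      (ae_llr_le hμν (Measure.absolutelyContinuous_of_smul_le hc hpμ) hpp' hc hc')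
  rw [integral_sub ?int₁ (integrable_const _), integral_add ?int₂ (hdiv.const_mul _),
    integral_add (integrable_const _) hint, integral_const_mul] at hbound
  case int₁ => exact ((integrable_const _).add hint).add (hdiv.const_mul _)
  case int₂ => exact (integrable_const _).add hint
  simp only [integral_const, probReal_univ, one_smul] at hbound
  have hdiv_le := integral_div_toReal_rnDeriv_le hpp' hG fun x => ENNReal.toReal_nonneg
  calc c * ∫ x, llr μ ν x ∂p
      ≤ c * log (c / c') + c * ∫ x, llr p p' x ∂p
        + c' * ∫ x, (μ.rnDeriv ν x).toReal / (p.rnDeriv p' x).toReal ∂p - c := by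
        have h := mul_le_mul_of_nonneg_left hbound hc.le
        field_simp at h ⊢
        linarith
    _ ≤ _ := by gcongr

end Component

section Mixture

variable {ι : Type*} [Fintype ι]

lemma MeasureTheory.Measure.sum_smul_absolutelyContinuous {α α' : ι → ℝ}
    {p p' : ι → Measure Ω} (hpos : ∀ i, 0 < α i → 0 < α' i)
    (hac : ∀ i, 0 < α i → p i ≪ p' i) :
    ∑ i, ENNReal.ofReal (α i) • p i ≪ ∑ i, ENNReal.ofReal (α' i) • p' i := by
  refine Finset.sum_induction _ (· ≪ _) (fun _ _ => .add_left) (.zero _) fun i _ => ?_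
  rcases le_or_gt (α i) 0 with hi | hi
  · simp [ENNReal.ofReal_of_nonpos hi]
  · exact Measure.smul_absolutelyContinuous.trans <| (hac i hi).trans <|
      (Measure.absolutelyContinuous_smul (ENNReal.ofReal_pos.2 (hpos i hi)).ne').trans <|
      Measure.absolutelyContinuous_of_le (Measure.le_finsetSum _ i)

lemma MeasureTheory.integrable_sum_smul_measure {E : Type*} [NormedAddCommGroup E] {f : Ω → E}
    {c : ι → ℝ} {q : ι → Measure Ω} (hf : ∀ i, 0 < c i → Integrable f (q i)) :
    Integrable f (∑ i, ENNReal.ofReal (c i) • q i) := by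
  refine integrable_finsetSum_measure.2 fun i _ => ?_
  rcases le_or_gt (c i) 0 with hi | hi
  · simp [ENNReal.ofReal_of_nonpos hi]
  · exact (hf i hi).smul_measure ENNReal.ofReal_ne_top

lemma MeasureTheory.integral_sum_smul_measure {f : Ω → ℝ} {c : ι → ℝ} {q : ι → Measure Ω}
    (hc : ∀ i, 0 ≤ c i) (hf : Integrable f (∑ i, ENNReal.ofReal (c i) • q i)) :
    ∫ x, f x ∂(∑ i, ENNReal.ofReal (c i) • q i) = ∑ i, c i * ∫ x, f x ∂(q i) := by
  rw [integral_finsetSum_measure fun i _ => hf.mono_measure (Measure.le_finsetSum _ i)]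
  simp only [integral_smul_measure, ENNReal.toReal_ofReal (hc _), smul_eq_mul]

end Mixture

section MixtureKL

variable {ι : Type*} [Fintype ι] {p p' : ι → Measure Ω} [∀ i, IsProbabilityMeasure (p i)]
  [∀ i, IsFiniteMeasure (p' i)] {α α' : ι → ℝ}

lemma integrable_llr_mixture (hpos : ∀ i, 0 < α i → 0 < α' i)
    (h : ∀ i, 0 < α i → p i ≪ p' i ∧ Integrable (llr (p i) (p' i)) (p i)) :
    Integrable (llr (∑ i, ENNReal.ofReal (α i) • p i) (∑ i, ENNReal.ofReal (α' i) • p' i))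
      (∑ i, ENNReal.ofReal (α i) • p i) :=
  integrable_sum_smul_measure fun i hi =>
    integrable_llr_of_smul_le (Measure.sum_smul_absolutelyContinuous hpos fun j hj => (h j hj).1)
      (h i hi).1 hi (hpos i hi) (Measure.le_finsetSum _ i) (Measure.le_finsetSum _ i) (h i hi).2

lemma integral_llr_mixture_le (hα : ∀ i, 0 ≤ α i) (hα' : ∀ i, 0 ≤ α' i)
    (hpos : ∀ i, 0 < α i → 0 < α' i)
    (h : ∀ i, 0 < α i → p i ≪ p' i ∧ Integrable (llr (p i) (p' i)) (p i)) :
    ∫ x, llr (∑ i, ENNReal.ofReal (α i) • p i) (∑ i, ENNReal.ofReal (α' i) • p' i) x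
        ∂(∑ i, ENNReal.ofReal (α i) • p i)
      ≤ ∑ i, α i * log (α i / α' i) + ∑ i, α i * ∫ x, llr (p i) (p' i) x ∂(p i) := by
  set μ := ∑ i, ENNReal.ofReal (α i) • p i
  set ν := ∑ i, ENNReal.ofReal (α' i) • p' i
  have hμν : μ ≪ ν := Measure.sum_smul_absolutelyContinuous hpos fun i hi => (h i hi).1
  have hmass : ∑ i, α' i * ∫ x, (μ.rnDeriv ν x).toReal ∂(p' i) = ∑ i, α i := by
    rw [← integral_sum_smul_measure hα' Measure.integrable_toReal_rnDeriv,
      Measure.integral_toReal_rnDeriv hμν]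
    simp [μ, measureReal_def, ENNReal.toReal_sum, hα]
  calc ∫ x, llr μ ν x ∂μ = ∑ i, α i * ∫ x, llr μ ν x ∂(p i) :=
        integral_sum_smul_measure hα (integrable_llr_mixture hpos h)
    _ ≤ ∑ i, (α i * log (α i / α' i) + α i * ∫ x, llr (p i) (p' i) x ∂(p i)
          + α' i * ∫ x, (μ.rnDeriv ν x).toReal ∂(p' i) - α i) := by
        refine Finset.sum_le_sum fun i _ => ?_
        rcases (hα i).eq_or_lt with hi | hi
        · rw [← hi]
          simpa using mul_nonneg (hα' i) (integral_nonneg fun _ => ENNReal.toReal_nonneg)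
        · exact mul_integral_llr_le_of_smul_le hμν (h i hi).1 hi (hpos i hi)
            (Measure.le_finsetSum _ i) (Measure.le_finsetSum _ i) (h i hi).2
    _ = ∑ i, α i * log (α i / α' i) + ∑ i, α i * ∫ x, llr (p i) (p' i) x ∂(p i) := by
        rw [Finset.sum_sub_distrib, Finset.sum_add_distrib, Finset.sum_add_distrib, hmass]
        ring

end MixtureKL

lemma coe_mul_klDiv_eq {a : ℝ} (ha : 0 ≤ a) (h : 0 < a → μ ≪ ν ∧ Integrable (llr μ ν) μ) :
    (a : EReal) * klDiv μ ν = ((a * ∫ x, llr μ ν x ∂μ : ℝ) : EReal) := by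
  rcases ha.eq_or_lt with rfl | ha
  · simp
  · rw [klDiv, if_pos (h ha), EReal.coe_mul]

lemma coe_mul_klDiv_ne_bot {a : ℝ} (ha : 0 ≤ a) : (a : EReal) * klDiv μ ν ≠ ⊥ := by
  rw [klDiv]
  split_ifs
  · exact EReal.coe_mul _ _ ▸ EReal.coe_ne_bot _
  · rcases ha.eq_or_lt with rfl | ha
    · simp
    · simp [EReal.coe_mul_top_of_pos ha]

lemma coe_mul_klDiv_eq_top {a : ℝ} (ha : 0 < a) (h : ¬(μ ≪ ν ∧ Integrable (llr μ ν) μ)) :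
    (a : EReal) * klDiv μ ν = ⊤ := by
  rw [klDiv, if_neg h, EReal.coe_mul_top_of_pos ha]

end

theorem klDiv_mixture_le_general
    {Ω : Type*} [MeasurableSpace Ω] (k : ℕ)
    (p p' : Fin k → Measure Ω)
    (hp : ∀ i, IsProbabilityMeasure (p i)) (hp' : ∀ i, IsProbabilityMeasure (p' i))
    (α α' : Fin k → ℝ)
    (hα : ∀ i, 0 ≤ α i)
    (hα' : ∀ i, 0 ≤ α' i)
    (hpos : ∀ i, 0 < α i → 0 < α' i) :
    klDiv (∑ i, ENNReal.ofReal (α i) • p i) (∑ i, ENNReal.ofReal (α' i) • p' i) ≤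
      ((∑ i, α i * Real.log (α i / α' i) : ℝ) : EReal) +
        ∑ i, ((α i : ℝ) : EReal) * klDiv (p i) (p' i) := by
  by_cases h : ∀ i, 0 < α i → p i ≪ p' i ∧ Integrable (llr (p i) (p' i)) (p i)
  · rw [klDiv, if_pos ⟨Measure.sum_smul_absolutelyContinuous hpos fun i hi => (h i hi).1,
      integrable_llr_mixture hpos h⟩,
      Finset.sum_congr rfl fun i _ => coe_mul_klDiv_eq (hα i) (h i)]
    exact_mod_cast integral_llr_mixture_le hα hα' hpos h
  · push Not at h
    obtain ⟨i, hi, hbad⟩ := h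
    rw [EReal.finsetSum_eq_top (fun j _ => coe_mul_klDiv_ne_bot (hα j)) (Finset.mem_univ i)
      (coe_mul_klDiv_eq_top hi fun h' => hbad h'.1 h'.2), EReal.coe_add_top]
    exact le_top

/-- The KL divergence between two mixtures `∑ i, αᵢ pᵢ` and `∑ i, α′ᵢ p′ᵢ` is bounded by
`KL(α ‖ α′) + ∑ i, αᵢ · KL(pᵢ ‖ p′ᵢ)`. -/
theorem klDiv_mixture_le
    {Ω : Type*} [MeasurableSpace Ω] (k : ℕ) (hk : 0 < k)
    (p p' : Fin k → Measure Ω)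
    (hp : ∀ i, IsProbabilityMeasure (p i)) (hp' : ∀ i, IsProbabilityMeasure (p' i))
    (α α' : Fin k → ℝ)
    (hα : ∀ i, 0 ≤ α i) (hαs : ∑ i, α i = 1)
    (hα' : ∀ i, 0 ≤ α' i) (hα's : ∑ i, α' i = 1)
    (hpos : ∀ i, 0 < α i → 0 < α' i) :
    klDiv (∑ i, ENNReal.ofReal (α i) • p i) (∑ i, ENNReal.ofReal (α' i) • p' i) ≤
      ((∑ i, α i * Real.log (α i / α' i) : ℝ) : EReal) +
        ∑ i, ((α i : ℝ) : EReal) * klDiv (p i) (p' i) :=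
  klDiv_mixture_le_general k p p' hp hp' α α' hα hα' hpos
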